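/- arXiv:2009.01286 — 3 statements merged into one kernel-verified Lean document; each statement's English description precedes it below -/
import Mathlib

section
/- Every nut graph on at least 2 vertices is non-bipartite. -/
open Matrix

attribute [local instance] Classical.propDecidable

/-- A nut graph: a connected simple graph whose adjacency matrix has a
one-dimensional kernel spanned by a vector with all entries nonzero. -/
def IsNutGraph {V : Type*} [Fintype V] (G : SimpleGraph V) : Prop :=
  G.Connected ∧ ∃ x : V → ℝ,
    G.adjMatrix ℝ *ᵥ x = 0 ∧ (∀ v, x v ≠ 0) ∧
    ∀ y : V → ℝ, G.adjMatrix ℝ *ᵥ y = 0 → ∃ c : ℝ, y = c • x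

/-- Every nut graph on at least 2 vertices is non-bipartite. -/
theorem nut_graph_not_bipartite {V : Type*} [Fintype V] (G : SimpleGraph V)
    (hcard : 2 ≤ Fintype.card V) (hG : IsNutGraph G) :
    ¬ G.Colorable 2 := by
  rintro ⟨C⟩
  obtain ⟨hconn, x, hx0, hxne, huniq⟩ := hG
  -- there exists an edge
  obtain ⟨u, v, huv⟩ : ∃ u v, G.Adj u v := by
    obtain ⟨a, b, hab⟩ := Fintype.exists_pair_of_one_lt_card hcard
    obtain ⟨w⟩ := hconn a b
    cases w with
    | nil => exact absurd rfl hab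
    | cons h _ => exact ⟨_, _, h⟩
  set y : V → ℝ := fun w => if C w = 0 then x w else -x w with hy
  have hopp : ∀ {a b : V}, G.Adj a b → (C a = 0 ↔ C b ≠ 0) := by
    intro a b hab
    have h := C.valid hab
    constructor
    · intro h0 h1; exact h (h0.trans h1.symm)
    · intro h1
      omega
  have hAy : G.adjMatrix ℝ *ᵥ y = 0 := by
    funext w
    have hAx : ∑ z ∈ G.neighborFinset w, x z = 0 := by
      have := congrFun hx0 w
      simpa [SimpleGraph.adjMatrix_mulVec_apply] using this
    by_cases hw : C w = 0
    · have hzy : ∀ z ∈ G.neighborFinset w, y z = -x z := by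
        intro z hz
        have hadj := (G.mem_neighborFinset w z).mp hz
        have : C z ≠ 0 := (hopp hadj).mp hw
        simp [hy, this]
      have : (G.adjMatrix ℝ *ᵥ y) w = ∑ z ∈ G.neighborFinset w, -x z := by
        rw [SimpleGraph.adjMatrix_mulVec_apply]
        exact Finset.sum_congr rfl hzy
      simp [this, Finset.sum_neg_distrib, hAx]
    · have hzy : ∀ z ∈ G.neighborFinset w, y z = x z := by
        intro z hz
        have hadj := (G.mem_neighborFinset w z).mp hz
        have : C z = 0 := by
          by_contra hzz
          exact hw ((hopp hadj).mpr hzz)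
        simp [hy, this]
      have : (G.adjMatrix ℝ *ᵥ y) w = ∑ z ∈ G.neighborFinset w, x z := by
        rw [SimpleGraph.adjMatrix_mulVec_apply]
        exact Finset.sum_congr rfl hzy
      simp [this, hAx]
  obtain ⟨c, hc⟩ := huniq y hAy
  have hs : ∀ w, (if C w = 0 then (1 : ℝ) else -1) = c := by
    intro w
    have h := congrFun hc w
    by_cases hw : C w = 0
    · simp only [hy, hw, if_true, Pi.smul_apply, smul_eq_mul] at h
      have : (1 : ℝ) * x w = c * x w := by linarith
      simpa [hw] using mul_right_cancel₀ (hxne w) this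
    · simp only [hy, hw, if_false, Pi.smul_apply, smul_eq_mul] at h
      have : (-1 : ℝ) * x w = c * x w := by linarith
      simpa [hw] using mul_right_cancel₀ (hxne w) this
  have h1 := hs u
  have h2 := hs v
  by_cases hu : C u = 0
  · have hv : C v ≠ 0 := (hopp huv).mp hu
    rw [if_pos hu] at h1
    rw [if_neg hv] at h2
    linarith
  · have hv : C v = 0 := by
      by_contra hv
      exact hu ((hopp huv).mpr hv)
    rw [if_neg hu] at h1
    rw [if_pos hv] at h2
    linarith
end

section
/- Let G be a graph with a bridge uv, and let B(G,uv) be the graph obtained by subdividing the edge uv twice (replacing edge uv by a path u–x–y–v with two new vertices x, y). Then B(G,uv) is a nut graph if and only if G is a nut graph. -/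
open Matrix

attribute [local instance] Classical.propDecidable

/-- The bridge construction `B(G, uv)`: insert two new vertices `x = inr 0` and
`y = inr 1` on the edge `uv`, replacing it by the path `u–x–y–v`. -/
def bridgeExt {V : Type*} (G : SimpleGraph V) (u v : V) : SimpleGraph (V ⊕ Fin 2) where
  Adj a b := match a, b with
    | Sum.inl a, Sum.inl b => G.Adj a b ∧ ¬(a = u ∧ b = v) ∧ ¬(a = v ∧ b = u)
    | Sum.inl a, Sum.inr i => (a = u ∧ i = 0) ∨ (a = v ∧ i = 1)
    | Sum.inr i, Sum.inl a => (a = u ∧ i = 0) ∨ (a = v ∧ i = 1)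
    | Sum.inr i, Sum.inr j => i ≠ j
  symm := by
    constructor
    rintro (a | i) (b | j) h
    · exact ⟨h.1.symm, fun hc => h.2.2 ⟨hc.2, hc.1⟩, fun hc => h.2.1 ⟨hc.2, hc.1⟩⟩
    · exact h
    · exact h
    · exact h.symm
  loopless := by
    constructor
    rintro (a | i) h
    · exact G.irrefl h.1
    · exact h rfl

/-!
Let `H` be `G` with the edge `uv` deleted, and let `σ` be `-1` on the component of `u` in `H`
and `1` elsewhere; `σ v = 1` because `uv` is a bridge. As `σ` is constant on the components of
`H`, multiplication by `σ` commutes with the adjacency operator of `H`. Hence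
`f ↦ (σ f, -f v, f u)` (values on `V`, then on the new vertices `x`, `y`) and `g ↦ σ · g|_V` are
mutually inverse linear maps between the kernels of `A(G)` and `A(B(G, uv))`, and both preserve
"no zero entry". Subdividing an edge does not change connectivity.
-/

def HasNutKernel {n : Type*} [Fintype n] (M : Matrix n n ℝ) : Prop :=
  ∃ x : n → ℝ, M *ᵥ x = 0 ∧ (∀ i, x i ≠ 0) ∧ ∀ y : n → ℝ, M *ᵥ y = 0 → ∃ c : ℝ, y = c • x

theorem isNutGraph_iff {V : Type*} [Fintype V] (G : SimpleGraph V) :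
    IsNutGraph G ↔ G.Connected ∧ HasNutKernel (G.adjMatrix ℝ) :=
  Iff.rfl

theorem HasNutKernel.of_linearMap {m n : Type*} [Fintype m] [Fintype n]
    {M : Matrix m m ℝ} {N : Matrix n n ℝ} (f : (m → ℝ) →ₗ[ℝ] (n → ℝ)) (g : (n → ℝ) → (m → ℝ))
    (hf : ∀ x, M *ᵥ x = 0 → N *ᵥ f x = 0) (hg : ∀ y, N *ᵥ y = 0 → M *ᵥ g y = 0)
    (hfg : ∀ y, N *ᵥ y = 0 → f (g y) = y) (hf_ne : ∀ x, (∀ i, x i ≠ 0) → ∀ j, f x j ≠ 0)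
    (hM : HasNutKernel M) : HasNutKernel N := by
  obtain ⟨x, hx, hx_ne, hx_span⟩ := hM
  refine ⟨f x, hf x hx, hf_ne x hx_ne, fun y hy => ?_⟩
  obtain ⟨c, hc⟩ := hx_span (g y) (hg y hy)
  exact ⟨c, by rw [← hfg y hy, hc, map_smul]⟩

namespace SimpleGraph

open Sum

variable {V : Type*}

theorem adjMatrix_mulVec_mul_of_adj {R : Type*} [CommSemiring R] [Fintype V]
    (H : SimpleGraph V) [DecidableRel H.Adj] {s : V → R} (hs : ∀ a b, H.Adj a b → s a = s b)
    (x : V → R) : H.adjMatrix R *ᵥ (s * x) = s * (H.adjMatrix R *ᵥ x) := by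
  ext a
  simp only [Matrix.mulVec, dotProduct, adjMatrix_apply, Pi.mul_apply, Finset.mul_sum]
  refine Finset.sum_congr rfl fun b _ => ?_
  by_cases hab : H.Adj a b
  · simp [hab, hs a b hab, mul_left_comm]
  · simp [hab]

noncomputable def sideSign (H : SimpleGraph V) (u a : V) : ℝ :=
  if H.Reachable u a then -1 else 1

section sideSign

variable {H : SimpleGraph V} {u : V}

theorem sideSign_self : H.sideSign u u = -1 := if_pos (Reachable.refl u)

theorem sideSign_of_not_reachable {a : V} (h : ¬H.Reachable u a) : H.sideSign u a = 1 :=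
  if_neg h

theorem sideSign_mul_self (a : V) : H.sideSign u a * H.sideSign u a = 1 := by
  unfold sideSign; split_ifs <;> norm_num

theorem sideSign_ne_zero (a : V) : H.sideSign u a ≠ 0 := by
  unfold sideSign; split_ifs <;> norm_num

theorem sideSign_eq_of_adj {a b : V} (hab : H.Adj a b) : H.sideSign u a = H.sideSign u b := by
  have : H.Reachable u a ↔ H.Reachable u b :=
    ⟨fun h => h.trans hab.reachable, fun h => h.trans hab.symm.reachable⟩
  simp only [sideSign, this]

theorem adjMatrix_mulVec_sideSign_mul [Fintype V] [DecidableRel H.Adj] (x : V → ℝ) :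
    H.adjMatrix ℝ *ᵥ (H.sideSign u * x) = H.sideSign u * (H.adjMatrix ℝ *ᵥ x) :=
  adjMatrix_mulVec_mul_of_adj H (fun _ _ => sideSign_eq_of_adj) x

end sideSign

section deleteEdge

variable {G : SimpleGraph V} {u v : V}

theorem adjMatrix_eq_deleteEdges_add {R : Type*} [NonAssocSemiring R] (huv : G.Adj u v) :
    G.adjMatrix R = (G.deleteEdges {s(u, v)}).adjMatrix R
      + Matrix.single u v 1 + Matrix.single v u 1 := by
  ext a b
  have := huv.ne
  simp only [adjMatrix_apply, Matrix.add_apply, Matrix.single_apply, deleteEdges_adj,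
    Set.mem_singleton_iff, Sym2.eq_iff]
  split_ifs <;> grind [Adj.symm]

theorem adjMatrix_mulVec_eq_deleteEdges_add {R : Type*} [NonAssocSemiring R] [Fintype V]
    (huv : G.Adj u v) (x : V → R) :
    G.adjMatrix R *ᵥ x = (G.deleteEdges {s(u, v)}).adjMatrix R *ᵥ x
      + Pi.single u (x v) + Pi.single v (x u) := by
  rw [adjMatrix_eq_deleteEdges_add huv, Matrix.add_mulVec, Matrix.add_mulVec,
    Matrix.single_mulVec, Matrix.single_mulVec, one_mul, one_mul]
  rfl

end deleteEdge

section bridgeExt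

variable {G : SimpleGraph V} {u v : V}

@[simp] theorem bridgeExt_adj_inl_inl {a b : V} :
    (bridgeExt G u v).Adj (inl a) (inl b) ↔ (G.deleteEdges {s(u, v)}).Adj a b := by
  change G.Adj a b ∧ ¬(a = u ∧ b = v) ∧ ¬(a = v ∧ b = u) ↔ _
  simp only [deleteEdges_adj, Set.mem_singleton_iff, Sym2.eq_iff]
  tauto

@[simp] theorem bridgeExt_adj_inl_inr {a : V} {i : Fin 2} :
    (bridgeExt G u v).Adj (inl a) (inr i) ↔ a = u ∧ i = 0 ∨ a = v ∧ i = 1 :=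
  Iff.rfl

@[simp] theorem bridgeExt_adj_inr_inl {a : V} {i : Fin 2} :
    (bridgeExt G u v).Adj (inr i) (inl a) ↔ a = u ∧ i = 0 ∨ a = v ∧ i = 1 :=
  Iff.rfl

@[simp] theorem bridgeExt_adj_inr_inr {i j : Fin 2} :
    (bridgeExt G u v).Adj (inr i) (inr j) ↔ i ≠ j :=
  Iff.rfl

theorem bridgeExt_reachable_inl_of_adj {a b : V} (hab : G.Adj a b) :
    (bridgeExt G u v).Reachable (inl a) (inl b) := by
  have hux : (bridgeExt G u v).Adj (inl u) (inr 0) := by simp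
  have hxy : (bridgeExt G u v).Adj (inr 0) (inr 1) := by simp
  have hyv : (bridgeExt G u v).Adj (inr 1) (inl v) := by simp
  have hpath := hux.reachable.trans (hxy.reachable.trans hyv.reachable)
  by_cases h : s(a, b) = s(u, v)
  · rcases Sym2.eq_iff.mp h with ⟨rfl, rfl⟩ | ⟨rfl, rfl⟩
    exacts [hpath, hpath.symm]
  · exact Adj.reachable (by simpa [h] using hab)

theorem Reachable.bridgeExt_inl {a b : V} (h : G.Reachable a b) :
    (bridgeExt G u v).Reachable (inl a) (inl b) := by
  rw [reachable_iff_reflTransGen] at h ⊢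
  exact Relation.ReflTransGen.lift' inl
    (fun _ _ hab => (reachable_iff_reflTransGen _ _).mp (bridgeExt_reachable_inl_of_adj hab)) _ _ h

theorem Reachable.of_bridgeExt (huv : G.Adj u v) {p q : V ⊕ Fin 2}
    (h : (bridgeExt G u v).Reachable p q) :
    G.Reachable (p.elim id fun _ => u) (q.elim id fun _ => u) := by
  rw [reachable_iff_reflTransGen] at h ⊢
  refine Relation.ReflTransGen.lift' (Sum.elim id fun _ => u) (fun p q hpq => ?_) _ _ h
  rw [Function.onFun, ← reachable_iff_reflTransGen]
  rcases p with a | i <;> rcases q with b | j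
  · exact (bridgeExt_adj_inl_inl.mp hpq).1.reachable
  · rcases hpq with ⟨rfl, -⟩ | ⟨rfl, -⟩
    exacts [Reachable.rfl, huv.symm.reachable]
  · rcases hpq with ⟨rfl, -⟩ | ⟨rfl, -⟩
    exacts [Reachable.rfl, huv.reachable]
  · exact Reachable.rfl

theorem bridgeExt_connected_iff (huv : G.Adj u v) : (bridgeExt G u v).Connected ↔ G.Connected := by
  constructor
  · intro h
    exact (connected_iff G).mpr ⟨fun a b => (h.preconnected (inl a) (inl b)).of_bridgeExt huv, ⟨u⟩⟩
  · intro h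
    rw [connected_iff_exists_forall_reachable]
    refine ⟨inr 0, ?_⟩
    rintro (a | i)
    · exact (Adj.reachable (by simp)).trans (h.preconnected u a).bridgeExt_inl
    · match i with
      | 0 => exact Reachable.rfl
      | 1 => exact Adj.reachable (by simp)

section mulVec

variable {R : Type*} [NonAssocSemiring R] [Fintype V] (z : V ⊕ Fin 2 → R)

theorem bridgeExt_mulVec_inl (a : V) :
    ((bridgeExt G u v).adjMatrix R *ᵥ z) (inl a)
      = ((G.deleteEdges {s(u, v)}).adjMatrix R *ᵥ (z ∘ inl)) a
        + (Pi.single u (z (inr 0)) : V → R) a + (Pi.single v (z (inr 1)) : V → R) a := by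
  simp [Matrix.mulVec, dotProduct, Fintype.sum_sum_type, adjMatrix_apply, Pi.single_apply,
    add_assoc]

theorem bridgeExt_mulVec_inr_zero :
    ((bridgeExt G u v).adjMatrix R *ᵥ z) (inr 0) = z (inl u) + z (inr 1) := by
  simp [Matrix.mulVec, dotProduct, Fintype.sum_sum_type, adjMatrix_apply]

theorem bridgeExt_mulVec_inr_one :
    ((bridgeExt G u v).adjMatrix R *ᵥ z) (inr 1) = z (inl v) + z (inr 0) := by
  simp [Matrix.mulVec, dotProduct, Fintype.sum_sum_type, adjMatrix_apply]

end mulVec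

end bridgeExt

section kernel

variable (G : SimpleGraph V) (u v : V)

noncomputable def bridgeLift : (V → ℝ) →ₗ[ℝ] (V ⊕ Fin 2 → ℝ) where
  toFun x := Sum.elim ((G.deleteEdges {s(u, v)}).sideSign u * x) ![-x v, x u]
  map_add' x y := by
    ext (a | i)
    · simp [mul_add]
    · fin_cases i <;> simp [add_comm]
  map_smul' c x := by
    ext (a | i)
    · simp
    · fin_cases i <;> simp

noncomputable def bridgeRestrict : (V ⊕ Fin 2 → ℝ) →ₗ[ℝ] (V → ℝ) where
  toFun z := (G.deleteEdges {s(u, v)}).sideSign u * (z ∘ inl)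
  map_add' y z := by ext; simp [mul_add]
  map_smul' c z := by ext; simp [mul_left_comm]

variable {G u v}

@[simp] theorem bridgeLift_apply_inl (x : V → ℝ) (a : V) :
    bridgeLift G u v x (inl a) = (G.deleteEdges {s(u, v)}).sideSign u a * x a :=
  rfl

@[simp] theorem bridgeLift_apply_inr_zero (x : V → ℝ) : bridgeLift G u v x (inr 0) = -x v :=
  rfl

@[simp] theorem bridgeLift_apply_inr_one (x : V → ℝ) : bridgeLift G u v x (inr 1) = x u :=
  rfl

@[simp] theorem bridgeLift_comp_inl (x : V → ℝ) :
    bridgeLift G u v x ∘ inl = (G.deleteEdges {s(u, v)}).sideSign u * x :=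
  rfl

@[simp] theorem bridgeRestrict_apply (z : V ⊕ Fin 2 → ℝ) (a : V) :
    bridgeRestrict G u v z a = (G.deleteEdges {s(u, v)}).sideSign u a * z (inl a) :=
  rfl

theorem bridgeRestrict_bridgeLift (x : V → ℝ) : bridgeRestrict G u v (bridgeLift G u v x) = x := by
  ext a
  simp [← mul_assoc, sideSign_mul_self]

theorem bridgeLift_apply_ne_zero {x : V → ℝ} (hx : ∀ a, x a ≠ 0) (p : V ⊕ Fin 2) :
    bridgeLift G u v x p ≠ 0 := by
  rcases p with a | i
  · simpa using ⟨sideSign_ne_zero a, hx a⟩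
  · match i with
    | 0 => simpa using hx v
    | 1 => simpa using hx u

theorem bridgeRestrict_apply_ne_zero {z : V ⊕ Fin 2 → ℝ} (hz : ∀ p, z p ≠ 0) (a : V) :
    bridgeRestrict G u v z a ≠ 0 := by
  simpa using ⟨sideSign_ne_zero a, hz (inl a)⟩

variable [Fintype V]

theorem bridgeLift_bridgeRestrict (hbridge : G.IsBridge s(u, v)) {z : V ⊕ Fin 2 → ℝ}
    (hz : (bridgeExt G u v).adjMatrix ℝ *ᵥ z = 0) :
    bridgeLift G u v (bridgeRestrict G u v z) = z := by
  have hu := congrFun hz (inr 0)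
  have hv := congrFun hz (inr 1)
  rw [bridgeExt_mulVec_inr_zero, Pi.zero_apply] at hu
  rw [bridgeExt_mulVec_inr_one, Pi.zero_apply] at hv
  ext (a | i)
  · simp [← mul_assoc, sideSign_mul_self]
  · match i with
    | 0 =>
      simp only [bridgeLift_apply_inr_zero, bridgeRestrict_apply, sideSign_of_not_reachable hbridge]
      linear_combination -hv
    | 1 =>
      simp only [bridgeLift_apply_inr_one, bridgeRestrict_apply, sideSign_self]
      linear_combination -hu

theorem mulVec_bridgeLift_eq_zero (huv : G.Adj u v) (hbridge : G.IsBridge s(u, v))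
    {x : V → ℝ} (hx : G.adjMatrix ℝ *ᵥ x = 0) :
    (bridgeExt G u v).adjMatrix ℝ *ᵥ bridgeLift G u v x = 0 := by
  rw [adjMatrix_mulVec_eq_deleteEdges_add huv] at hx
  ext (a | i) <;> rw [Pi.zero_apply]
  · have hx_a := congrFun hx a
    rw [bridgeExt_mulVec_inl]
    simp only [bridgeLift_comp_inl, bridgeLift_apply_inr_zero, bridgeLift_apply_inr_one,
      adjMatrix_mulVec_sideSign_mul, Pi.mul_apply, Pi.add_apply, Pi.zero_apply] at hx_a ⊢
    obtain rfl | hau := eq_or_ne a u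
    · simp only [Pi.single_eq_same, Pi.single_eq_of_ne huv.ne, sideSign_self] at hx_a ⊢
      linarith
    obtain rfl | hav := eq_or_ne a v
    · simp only [Pi.single_eq_same, Pi.single_eq_of_ne hau, sideSign_of_not_reachable hbridge]
        at hx_a ⊢
      linarith
    · simp only [Pi.single_eq_of_ne hau, Pi.single_eq_of_ne hav, add_zero] at hx_a ⊢
      rw [hx_a, mul_zero]
  · match i with
    | 0 =>
      rw [bridgeExt_mulVec_inr_zero]
      simp [sideSign_self]
    | 1 =>
      rw [bridgeExt_mulVec_inr_one]
      simp [sideSign_of_not_reachable hbridge]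

theorem mulVec_bridgeRestrict_eq_zero (huv : G.Adj u v) (hbridge : G.IsBridge s(u, v))
    {z : V ⊕ Fin 2 → ℝ} (hz : (bridgeExt G u v).adjMatrix ℝ *ᵥ z = 0) :
    G.adjMatrix ℝ *ᵥ bridgeRestrict G u v z = 0 := by
  have hu := congrFun hz (inr 0)
  have hv := congrFun hz (inr 1)
  rw [bridgeExt_mulVec_inr_zero, Pi.zero_apply] at hu
  rw [bridgeExt_mulVec_inr_one, Pi.zero_apply] at hv
  rw [adjMatrix_mulVec_eq_deleteEdges_add huv]
  ext a
  have hz_a := congrFun hz (inl a)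
  rw [bridgeExt_mulVec_inl, Pi.zero_apply] at hz_a
  have hrestrict : bridgeRestrict G u v z = (G.deleteEdges {s(u, v)}).sideSign u * (z ∘ inl) :=
    rfl
  simp only [hrestrict, adjMatrix_mulVec_sideSign_mul, Pi.mul_apply, Pi.add_apply, Pi.zero_apply,
    Function.comp_apply]
  obtain rfl | hau := eq_or_ne a u
  · simp only [Pi.single_eq_same, Pi.single_eq_of_ne huv.ne, sideSign_self,
      sideSign_of_not_reachable hbridge] at hz_a ⊢
    linarith
  obtain rfl | hav := eq_or_ne a v
  · simp only [Pi.single_eq_same, Pi.single_eq_of_ne hau, sideSign_self,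
      sideSign_of_not_reachable hbridge] at hz_a ⊢
    linarith
  · simp only [Pi.single_eq_of_ne hau, Pi.single_eq_of_ne hav, add_zero] at hz_a ⊢
    rw [hz_a, mul_zero]

end kernel

end SimpleGraph

open SimpleGraph

/-- Inserting two vertices on a bridge `uv` of `G` yields a nut graph
if and only if `G` is a nut graph. -/
theorem bridgeExt_nut_iff {V : Type*} [Fintype V] (G : SimpleGraph V) (u v : V)
    (huv : G.Adj u v) (hbridge : G.IsBridge s(u, v)) :
    IsNutGraph (bridgeExt G u v) ↔ IsNutGraph G := by
  rw [isNutGraph_iff, isNutGraph_iff, bridgeExt_connected_iff huv]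
  have hlift := fun x => mulVec_bridgeLift_eq_zero (x := x) huv hbridge
  have hrestrict := fun z => mulVec_bridgeRestrict_eq_zero (z := z) huv hbridge
  refine and_congr_right fun _ => ⟨fun h => ?_, fun h => ?_⟩
  · exact h.of_linearMap (bridgeRestrict G u v) (bridgeLift G u v) hrestrict hlift
      (fun x _ => bridgeRestrict_bridgeLift x) (fun _ => bridgeRestrict_apply_ne_zero)
  · exact h.of_linearMap (bridgeLift G u v) (bridgeRestrict G u v) hlift hrestrict
      (fun _ => bridgeLift_bridgeRestrict hbridge) (fun _ => bridgeLift_apply_ne_zero)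
end

section
/- Let G be a graph with an edge uv, and let S(G,uv) be the graph obtained by subdividing the edge uv four times (replacing uv by a path u–w–x–y–z–v with four new vertices). Then S(G,uv) is a nut graph if and only if G is a nut graph. -/
/-!
At the path vertices `w, x, y, z` a kernel vector `f` of `S(G, uv)` satisfies
`f u + f x = 0`, `f w + f y = 0`, `f x + f z = 0`, `f y + f v = 0`, so it is determined by
`a = f u` and `b = f v` and takes the values `b, -a, -b, a` on the path. At `u` the new
neighbour `w` then contributes exactly what the lost neighbour `v` did, so restriction to `V`
is a linear bijection between the two kernels that preserves nowhere-vanishing vectors.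
Connectivity is preserved because the path replaces the edge `uv`.
-/

open Matrix

attribute [local instance] Classical.propDecidable

/-- The subdivision construction `S(G, uv)`: replace edge `uv` by a path
`u–w–x–y–z–v` through four new vertices `w = inr 0`, `x = inr 1`,
`y = inr 2`, `z = inr 3`. -/
def subdivExt {V : Type*} (G : SimpleGraph V) (u v : V) : SimpleGraph (V ⊕ Fin 4) where
  Adj a b := match a, b with
    | Sum.inl a, Sum.inl b => G.Adj a b ∧ ¬(a = u ∧ b = v) ∧ ¬(a = v ∧ b = u)
    | Sum.inl a, Sum.inr i => (a = u ∧ i = 0) ∨ (a = v ∧ i = 3)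
    | Sum.inr i, Sum.inl a => (a = u ∧ i = 0) ∨ (a = v ∧ i = 3)
    | Sum.inr i, Sum.inr j => i.val + 1 = j.val ∨ j.val + 1 = i.val
  symm := by
    constructor
    rintro (a | i) (b | j) h
    · exact ⟨h.1.symm, fun hc => h.2.2 ⟨hc.2, hc.1⟩, fun hc => h.2.1 ⟨hc.2, hc.1⟩⟩
    · exact h
    · exact h
    · exact h.symm
  loopless := by
    constructor
    rintro (a | i) h
    · exact G.irrefl h.1
    · omega

namespace SimpleGraph

variable {V W : Type*}

theorem Reachable.lift {G : SimpleGraph V} {H : SimpleGraph W} (f : V → W)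
    (hf : ∀ a b, G.Adj a b → H.Reachable (f a) (f b)) {a b : V} (h : G.Reachable a b) :
    H.Reachable (f a) (f b) := by
  rw [reachable_iff_reflTransGen] at h ⊢
  exact Relation.ReflTransGen.lift' f
    (fun a b hab => (reachable_iff_reflTransGen _ _).1 (hf a b hab)) a b h

theorem adjMatrix_mulVec_apply_eq_sum_ite [Fintype V] (G : SimpleGraph V) (y : V → ℝ) (a : V) :
    (G.adjMatrix ℝ *ᵥ y) a = ∑ b, if G.Adj a b then y b else 0 := by
  simp [mulVec, dotProduct, adjMatrix_apply, ite_mul]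

end SimpleGraph

open SimpleGraph

section Subdivision

variable {V : Type*} {G : SimpleGraph V} {u v : V}

@[simp] theorem subdivExt_adj_inl_inl {a b : V} : (subdivExt G u v).Adj (.inl a) (.inl b) ↔
    G.Adj a b ∧ ¬(a = u ∧ b = v) ∧ ¬(a = v ∧ b = u) := Iff.rfl

@[simp] theorem subdivExt_adj_inl_inr {a : V} {i : Fin 4} :
    (subdivExt G u v).Adj (.inl a) (.inr i) ↔ (a = u ∧ i = 0) ∨ (a = v ∧ i = 3) := Iff.rfl

@[simp] theorem subdivExt_adj_inr_inl {a : V} {i : Fin 4} :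
    (subdivExt G u v).Adj (.inr i) (.inl a) ↔ (a = u ∧ i = 0) ∨ (a = v ∧ i = 3) := Iff.rfl

@[simp] theorem subdivExt_adj_inr_inr {i j : Fin 4} :
    (subdivExt G u v).Adj (.inr i) (.inr j) ↔ i.val + 1 = j.val ∨ j.val + 1 = i.val := Iff.rfl

theorem subdivExt_reachable_inl_inr (i : Fin 4) :
    (subdivExt G u v).Reachable (.inl u) (.inr i) := by
  have h0 : (subdivExt G u v).Reachable (.inl u) (.inr 0) := Adj.reachable (by simp)
  have h1 : (subdivExt G u v).Reachable (.inr 0) (.inr 1) := Adj.reachable (by simp)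
  have h2 : (subdivExt G u v).Reachable (.inr 1) (.inr 2) := Adj.reachable (by simp)
  have h3 : (subdivExt G u v).Reachable (.inr 2) (.inr 3) := Adj.reachable (by simp)
  fin_cases i
  exacts [h0, h0.trans h1, (h0.trans h1).trans h2, ((h0.trans h1).trans h2).trans h3]

theorem subdivExt_reachable_of_adj {a b : V} (hab : G.Adj a b) :
    (subdivExt G u v).Reachable (.inl a) (.inl b) := by
  have huv : (subdivExt G u v).Reachable (.inl u) (.inl v) :=
    (subdivExt_reachable_inl_inr 3).trans (Adj.reachable (by simp))
  by_cases hedge : (a = u ∧ b = v) ∨ (a = v ∧ b = u)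
  · rcases hedge with ⟨rfl, rfl⟩ | ⟨rfl, rfl⟩
    exacts [huv, huv.symm]
  · exact Adj.reachable (subdivExt_adj_inl_inl.2 ⟨hab, not_or.1 hedge⟩)

theorem subdivExt_connected (hG : G.Connected) : (subdivExt G u v).Connected := by
  rw [connected_iff_exists_forall_reachable]
  refine ⟨.inl u, ?_⟩
  rintro (b | i)
  · exact (hG.preconnected u b).lift _ fun _ _ => subdivExt_reachable_of_adj
  · exact subdivExt_reachable_inl_inr i

/-- Collapsing the new path onto `u` sends every edge of `S(G, uv)` to an edge or a vertex
of `G`. -/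
theorem connected_of_subdivExt_connected (huv : G.Adj u v) (hS : (subdivExt G u v).Connected) :
    G.Connected := by
  rw [connected_iff_exists_forall_reachable]
  refine ⟨u, fun b => (hS.preconnected (.inl u) (.inl b)).lift (Sum.elim id fun _ => u) ?_⟩
  rintro (a | i) (b | j) h
  · exact h.1.reachable
  · rcases h with ⟨rfl, -⟩ | ⟨rfl, -⟩
    exacts [.rfl, huv.symm.reachable]
  · rcases h with ⟨rfl, -⟩ | ⟨rfl, -⟩
    exacts [.rfl, huv.reachable]
  · exact .rfl

def subdivExtVec (u v : V) (x : V → ℝ) : V ⊕ Fin 4 → ℝ :=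
  Sum.elim x ![x v, -x u, -x v, x u]

@[simp] theorem subdivExtVec_comp_inl (x : V → ℝ) : subdivExtVec u v x ∘ Sum.inl = x := rfl

theorem subdivExtVec_smul (c : ℝ) (x : V → ℝ) :
    subdivExtVec u v (c • x) = c • subdivExtVec u v x := by
  funext p
  rcases p with a | i
  · rfl
  · fin_cases i <;> simp [subdivExtVec]

theorem subdivExtVec_ne_zero {x : V → ℝ} (hx : ∀ a, x a ≠ 0) (p : V ⊕ Fin 4) :
    subdivExtVec u v x p ≠ 0 := by
  rcases p with a | i
  · exact hx a
  · fin_cases i <;> simp [subdivExtVec, hx]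

variable [Fintype V]

theorem subdivExt_mulVec_inr (y : V ⊕ Fin 4 → ℝ) (i : Fin 4) :
    ((subdivExt G u v).adjMatrix ℝ *ᵥ y) (.inr i) =
      ![y (.inl u) + y (.inr 1), y (.inr 0) + y (.inr 2), y (.inr 1) + y (.inr 3),
        y (.inr 2) + y (.inl v)] i := by
  rw [adjMatrix_mulVec_apply_eq_sum_ite, Fintype.sum_sum_type, Fin.sum_univ_four]
  fin_cases i <;> simp [Finset.sum_ite_eq', add_comm]

theorem subdivExt_mulVec_inl (huv : G.Adj u v) (y : V ⊕ Fin 4 → ℝ) (a : V) :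
    ((subdivExt G u v).adjMatrix ℝ *ᵥ y) (.inl a) =
      (G.adjMatrix ℝ *ᵥ (y ∘ .inl)) a
        + (if a = u then y (.inr 0) - y (.inl v) else 0)
        + (if a = v then y (.inr 3) - y (.inl u) else 0) := by
  have hedge : ∀ b,
      (if G.Adj a b ∧ ¬(a = u ∧ b = v) ∧ ¬(a = v ∧ b = u) then y (.inl b) else 0) =
      (if G.Adj a b then y (.inl b) else 0) - (if a = u ∧ b = v then y (.inl b) else 0)
        - (if a = v ∧ b = u then y (.inl b) else 0) := by
    intro b
    have hne := huv.ne
    split_ifs <;> simp_all [huv.symm]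
  rw [adjMatrix_mulVec_apply_eq_sum_ite, adjMatrix_mulVec_apply_eq_sum_ite, Fintype.sum_sum_type,
    Fin.sum_univ_four]
  simp only [subdivExt_adj_inl_inl, subdivExt_adj_inl_inr, Function.comp_apply, hedge,
    Finset.sum_sub_distrib, ite_and, Finset.sum_ite_irrel, Finset.sum_ite_eq', Finset.mem_univ,
    if_true, Finset.sum_const_zero, Fin.reduceEq, and_true, and_false, or_false, false_or,
    if_false, add_zero]
  split_ifs <;> ring

theorem subdivExt_mulVec_eq_zero_iff (huv : G.Adj u v) (y : V ⊕ Fin 4 → ℝ) :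
    (subdivExt G u v).adjMatrix ℝ *ᵥ y = 0 ↔
      G.adjMatrix ℝ *ᵥ (y ∘ .inl) = 0 ∧ y = subdivExtVec u v (y ∘ .inl) := by
  constructor
  · intro hy
    have hpath : y = subdivExtVec u v (y ∘ .inl) := by
      have e i := (subdivExt_mulVec_inr y i).symm.trans (congrFun hy (.inr i))
      have e0 : y (.inl u) + y (.inr 1) = 0 := e 0
      have e1 : y (.inr 0) + y (.inr 2) = 0 := e 1
      have e2 : y (.inr 1) + y (.inr 3) = 0 := e 2
      have e3 : y (.inr 2) + y (.inl v) = 0 := e 3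
      funext p
      rcases p with a | i
      · rfl
      · fin_cases i
        · show y (.inr 0) = y (.inl v); linarith
        · show y (.inr 1) = -y (.inl u); linarith
        · show y (.inr 2) = -y (.inl v); linarith
        · show y (.inr 3) = y (.inl u); linarith
    refine ⟨funext fun a => ?_, hpath⟩
    have ha := congrFun hy (.inl a)
    rw [subdivExt_mulVec_inl huv, hpath] at ha
    simpa [subdivExtVec] using ha
  · rintro ⟨hG, hpath⟩
    funext p
    rcases p with a | i
    · rw [subdivExt_mulVec_inl huv, hG, hpath]
      simp [subdivExtVec]
    · rw [subdivExt_mulVec_inr, hpath]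
      fin_cases i <;> simp [subdivExtVec]

theorem subdivExt_mulVec_subdivExtVec_eq_zero_iff (huv : G.Adj u v) (x : V → ℝ) :
    (subdivExt G u v).adjMatrix ℝ *ᵥ subdivExtVec u v x = 0 ↔ G.adjMatrix ℝ *ᵥ x = 0 := by
  simpa using subdivExt_mulVec_eq_zero_iff huv (subdivExtVec u v x)

end Subdivision

/-- Inserting four vertices on an edge `uv` of `G` yields a nut graph
if and only if `G` is a nut graph. -/
theorem subdivExt_nut_iff {V : Type*} [Fintype V] (G : SimpleGraph V) (u v : V)
    (huv : G.Adj u v) :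
    IsNutGraph (subdivExt G u v) ↔ IsNutGraph G := by
  constructor
  · rintro ⟨hconn, x, hx, hx0, hspan⟩
    refine ⟨connected_of_subdivExt_connected huv hconn, x ∘ .inl,
      ((subdivExt_mulVec_eq_zero_iff huv x).1 hx).1, fun a => hx0 _, fun y hy => ?_⟩
    obtain ⟨c, hc⟩ := hspan _ ((subdivExt_mulVec_subdivExtVec_eq_zero_iff huv y).2 hy)
    exact ⟨c, congrArg (· ∘ Sum.inl) hc⟩
  · rintro ⟨hconn, x, hx, hx0, hspan⟩
    refine ⟨subdivExt_connected hconn, subdivExtVec u v x,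
      (subdivExt_mulVec_subdivExtVec_eq_zero_iff huv x).2 hx, subdivExtVec_ne_zero hx0,
      fun y hy => ?_⟩
    obtain ⟨hyG, hy_eq⟩ := (subdivExt_mulVec_eq_zero_iff huv y).1 hy
    obtain ⟨c, hc⟩ := hspan _ hyG
    exact ⟨c, by rw [hy_eq, hc, subdivExtVec_smul]⟩
end
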